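/- Let T be a third order divergence-free source form, and let H^{ab;c₁c₂,i₁i₂} denote the second order Helmholtz components of T. Then for all indices: ∂^{d₁d₂,j₁j₂j₃j₄} H^{ab;c₁c₂,i₁i₂} = 3 Sym_{(j₁,j₂,j₃,j₄)} ∂^{d₁d₂,j₂j₃j₄} ∂^{ab,c₁c₂j₁} T^{i₁i₂}, where Sym_{(j₁,j₂,j₃,j₄)} denotes symmetrization over the four indices j₁, j₂, j₃, j₄. -/

import Mathlib

/-!
Everything is computed along the lines `t ↦ perturb z p q K t` that move the single coordinate
direction `∂^{pq,K}`. If `|K|` exceeds the order `k` of `F`, then `F` is constant along such a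
line and, for `|K| = k + 1`, `D_j F` is affine in `t`; this gives
`∂^{pq,K} D_j F = (K_j / (k + 1)) ∂^{pq,K∖j} F`.

For `|I| = 2` and `|K| = 4` only the term `-3 D_j ∂^{ab,Ij} T^{c₁c₂}` of `E^{ab,I}(T^{c₁c₂})`
survives in `∂^{d₁d₂,K} H^{ab;c₁c₂,I}`, so the claim holds with `(c₁,c₂)` and `(i₁,i₂)`
exchanged. To swap them back, apply `∂^{pq,K}` to the divergence `D_b T^{ab} + Γ^a_{bc} T^{bc}`
(the Christoffel symbols have order one): this gives the cyclic identity
`Σ_b K_b ∂^{pq,K∖b} T^{ab} = 0`. Used twice, together with the symmetry of second partial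
derivatives, it shows that `X(pq,uv) = Σ_j K_j ∂^{d₁d₂,K∖j} ∂^{ab,pqj} T^{uv}` satisfies a
first Bianchi identity. Since `X` is symmetric within each pair, the pairs can be exchanged,
exactly as for the Riemann tensor.
-/

open scoped BigOperators

namespace JetMetric

/-- Unordered multi-indices: multisets of coordinate indices. -/
abbrev MIdx (m : ℕ) := Multiset (Fin m)

/-- The (infinite) jet space of metrics on ℝ^m: base coordinates `x^i` together with
all derivative coordinates `g_{ab,I}`. -/
abbrev Jet (m : ℕ) := (Fin m → ℝ) × (Fin m → Fin m → MIdx m → ℝ)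

/-- The zeroth order coordinates `g_{ab}` as a matrix. -/
noncomputable def gMat {m : ℕ} (z : Jet m) : Matrix (Fin m) (Fin m) ℝ :=
  Matrix.of fun a b => z.2 a b 0

/-- The domain of interest: symmetric jets with nondegenerate metric. -/
def JetDom (m : ℕ) : Set (Jet m) :=
  {z | (∀ a b I, z.2 a b I = z.2 b a I) ∧ (gMat z).det ≠ 0}

/-- The symmetrized pair delta `δ^a_{(c} δ^b_{d)}`. -/
noncomputable def pairWt {m : ℕ} (a b c d : Fin m) : ℝ :=
  ((if a = c ∧ b = d then (1 : ℝ) else 0) + (if a = d ∧ b = c then (1 : ℝ) else 0)) / 2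

/-- The symmetrized multi-index delta `δ^{(i₁}_{j₁} ⋯ δ^{i_k)}_{j_k}` for unordered
multi-indices `I`, `J`. -/
noncomputable def idxWt {m : ℕ} (I J : MIdx m) : ℝ :=
  if I = J then
    (∏ s ∈ I.toFinset, (Nat.factorial (I.count s) : ℝ)) /
      (Nat.factorial (Multiset.card I) : ℝ)
  else 0

/-- The weighted partial derivative operator `∂^{ab,I}`, realized as the directional
derivative along the symmetrized coordinate direction determined by
`∂^{ab,I} g_{cd,J} = δ^a_{(c} δ^b_{d)} δ^{(i₁}_{j₁} ⋯ δ^{i_k)}_{j_k}`. -/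
noncomputable def pd {m : ℕ} (a b : Fin m) (I : MIdx m) (F : Jet m → ℝ) : Jet m → ℝ :=
  fun z => deriv (fun t : ℝ =>
    F (z.1, fun c d J => z.2 c d J + t * (pairWt a b c d * idxWt I J))) 0

/-- The partial derivative `∂/∂x^i` in a base coordinate. -/
noncomputable def xpd {m : ℕ} (i : Fin m) (F : Jet m → ℝ) : Jet m → ℝ :=
  fun z => deriv (fun t : ℝ => F (Function.update z.1 i (z.1 i + t), z.2)) 0

/-- The partial derivative `∂/∂x^i` of a function on the base `ℝ^m`. -/
noncomputable def vpd {m : ℕ} (i : Fin m) (f : (Fin m → ℝ) → ℝ) : (Fin m → ℝ) → ℝ :=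
  fun x => deriv (fun t : ℝ => f (Function.update x i (x i + t))) 0

/-- The total derivative operator
`D_i = ∂/∂x^i + Σ_{|I| ≥ 0} g_{ab,Ii} ∂^{ab,I}`, the Einstein sum running over all
ordered multi-indices `I` (lists) and all `a`, `b`. -/
noncomputable def Dt {m : ℕ} (i : Fin m) (F : Jet m → ℝ) : Jet m → ℝ :=
  fun z => xpd i F z +
    ∑' l : List (Fin m), ∑ a : Fin m, ∑ b : Fin m,
      z.2 a b ((l : MIdx m) + {i}) * pd a b (l : MIdx m) F z

/-- The iterated total derivative `D_I = D_{i₁} ⋯ D_{i_k}` along an ordered multi-index. -/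
noncomputable def DtL {m : ℕ} (l : List (Fin m)) (F : Jet m → ℝ) : Jet m → ℝ :=
  l.foldr Dt F

/-- The higher Euler–Lagrange operators
`E^{ab,I}(F) = Σ_{|J| ≥ 0} binom(|I|+|J|,|I|) (−D)_J (∂^{ab,IJ} F)`, the sum running over
all ordered multi-indices `J`. -/
noncomputable def hEL {m : ℕ} (a b : Fin m) (I : MIdx m) (F : Jet m → ℝ) : Jet m → ℝ :=
  fun z => ∑' J : List (Fin m),
    (Nat.choose (Multiset.card I + J.length) (Multiset.card I) : ℝ) * (-1 : ℝ) ^ J.length *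
      DtL J (pd a b (I + (J : MIdx m)) F) z

/-- The Euler–Lagrange operator `E^{ab}(L) = Σ_{|I| ≥ 0} (−D)_I (∂^{ab,I} L)`. -/
noncomputable def EL {m : ℕ} (a b : Fin m) (F : Jet m → ℝ) : Jet m → ℝ := hEL a b 0 F

/-- The Helmholtz components `H^{ab;cd,I} = ∂^{cd,I} T^{ab} − (−1)^{|I|} E^{ab,I}(T^{cd})`. -/
noncomputable def Helm {m : ℕ} (T : Fin m → Fin m → Jet m → ℝ) (a b c d : Fin m)
    (I : MIdx m) : Jet m → ℝ :=
  fun z => pd c d I (T a b) z - (-1 : ℝ) ^ (Multiset.card I) * hEL a b I (T c d) z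

/-- Truncated jet coordinates of order ≤ k (derivative slots labelled by ordered tuples). -/
abbrev Trunc (m k : ℕ) :=
  (Fin m → ℝ) × (Fin m → Fin m → (j : Fin (k + 1)) → ((Fin (j : ℕ) → Fin m) → ℝ))

/-- Projection from the jet space onto the truncated coordinates. -/
noncomputable def truncProj (m k : ℕ) (z : Jet m) : Trunc m k :=
  (z.1, fun a b _j p => z.2 a b ((List.ofFn p : List (Fin m)) : MIdx m))

/-- The nondegeneracy domain in the truncated coordinates. -/
def truncDom (m k : ℕ) : Set (Trunc m k) :=
  {w | (Matrix.of fun a b => w.2 a b ⟨0, Nat.succ_pos k⟩ (fun i => i.elim0)).det ≠ 0}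

/-- `F` is a differential function of order `k`: on the domain where `det g ≠ 0` it is a
smooth function of the variables `x^i` and `g_{ab,I}` with `|I| ≤ k` only. -/
def IsDF (m k : ℕ) (F : Jet m → ℝ) : Prop :=
  ∃ f : Trunc m k → ℝ, ContDiffOn ℝ (⊤ : ℕ∞) f (truncDom m k) ∧
    ∀ z, F z = f (truncProj m k z)

/-- A source form of order `k`: symmetric components `T^{ab} = T^{(ab)}`, each a
differential function of order `k`. -/
structure SourceForm (m k : ℕ) where
  T : Fin m → Fin m → Jet m → ℝ
  symm : ∀ a b, T a b = T b a
  order : ∀ a b, IsDF m k (T a b)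

/-- The inverse metric `g^{ab}`. -/
noncomputable def ginv {m : ℕ} (z : Jet m) : Matrix (Fin m) (Fin m) ℝ := (gMat z)⁻¹

/-- The Christoffel symbols `Γ^a_{bc} = ½ g^{ad}(g_{db,c} + g_{dc,b} − g_{bc,d})`. -/
noncomputable def Gamma {m : ℕ} (a b c : Fin m) (z : Jet m) : ℝ :=
  (1 / 2) * ∑ d, ginv z a d * (z.2 d b {c} + z.2 d c {b} - z.2 b c {d})

/-- `T` is divergence-free: `D_b T^{ab} + Γ^a_{bc} T^{bc} = 0` identically. -/
def DivFree {m k : ℕ} (S : SourceForm m k) : Prop :=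
  ∀ a, ∀ z ∈ JetDom m,
    (∑ b, Dt b (S.T a b) z) + (∑ b, ∑ c, Gamma a b c z * S.T b c z) = 0

/-- Evolutionary components `X_{ev,ab} = Q_{ab} − P^c g_{ab,c}` of a projectable
vector field `X = P^i ∂/∂x^i + Q_{ab} ∂^{ab}`. -/
noncomputable def Xev {m : ℕ} (P : Fin m → (Fin m → ℝ) → ℝ) (Q : Fin m → Fin m → Jet m → ℝ)
    (a b : Fin m) : Jet m → ℝ :=
  fun z => Q a b z - ∑ c, P c z.1 * z.2 a b {c}

/-- The prolongation `pr X = P^i D_i + Σ_{|I| ≥ 0} D_I(X_{ev,ab}) ∂^{ab,I}` of a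
projectable vector field, acting on differential functions. -/
noncomputable def prX {m : ℕ} (P : Fin m → (Fin m → ℝ) → ℝ) (Q : Fin m → Fin m → Jet m → ℝ)
    (F : Jet m → ℝ) : Jet m → ℝ :=
  fun z => (∑ i, P i z.1 * Dt i F z) +
    ∑' l : List (Fin m), ∑ a, ∑ b, DtL l (Xev P Q a b) z * pd a b (l : MIdx m) F z

/-- The components of the Lie derivative of a source form along the prolongation of a
projectable vector field:
`(ℒ_X T)^{ab} = pr X(T^{ab}) + T^{cd} ∂^{ab,∅} Q_{cd} + (∂P^j/∂x^j) T^{ab}`. -/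
noncomputable def LieT {m : ℕ} (P : Fin m → (Fin m → ℝ) → ℝ) (Q : Fin m → Fin m → Jet m → ℝ)
    (T : Fin m → Fin m → Jet m → ℝ) (a b : Fin m) : Jet m → ℝ :=
  fun z => prX P Q (T a b) z + (∑ c, ∑ d, T c d z * pd a b 0 (Q c d) z)
    + (∑ j, vpd j (P j) z.1) * T a b z

/-- The `∂^{ab}`-components `Q_{ab} = −2 ξ^c_{,(a} g_{b)c}` of the lift `X_ξ` of a vector
field `ξ` on `ℝ^m` to the bundle of metrics. -/
noncomputable def liftQ {m : ℕ} (ξ : Fin m → (Fin m → ℝ) → ℝ) (a b : Fin m) : Jet m → ℝ :=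
  fun z => -∑ c, (vpd a (ξ c) z.1 * z.2 b c 0 + vpd b (ξ c) z.1 * z.2 a c 0)

/-- `T` is natural: `pr X_ξ(T^{ab}) − 2 ξ^{(a}_{,c} T^{b)c} + ξ^c_{,c} T^{ab} = 0`
identically, for every smooth vector field `ξ` on `ℝ^m`. -/
def Natural {m k : ℕ} (S : SourceForm m k) : Prop :=
  ∀ ξ : Fin m → (Fin m → ℝ) → ℝ, (∀ c, ContDiff ℝ (⊤ : ℕ∞) (ξ c)) →
    ∀ a b, ∀ z ∈ JetDom m,
      prX ξ (liftQ ξ) (S.T a b) z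
        - ((∑ c, vpd c (ξ a) z.1 * S.T b c z) + (∑ c, vpd c (ξ b) z.1 * S.T a c z))
        + (∑ c, vpd c (ξ c) z.1) * S.T a b z = 0

/-- `T` admits translational conservation laws: `E^{hk}(g_{ab,p} T^{ab}) = 0` identically. -/
def TranslCL {m k : ℕ} (S : SourceForm m k) : Prop :=
  ∀ p h k', ∀ z ∈ JetDom m,
    EL h k' (fun w => ∑ a, ∑ b, w.2 a b {p} * S.T a b w) z = 0

/-- `T` is locally variational: all Helmholtz components vanish identically. -/
def LocallyVariational {m k : ℕ} (S : SourceForm m k) : Prop :=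
  ∀ a b c d (I : MIdx m), ∀ z ∈ JetDom m, Helm S.T a b c d I z = 0

/-- `F` has no explicit dependence on the base coordinates `x^i`. -/
def NoExplicitX {m : ℕ} (F : Jet m → ℝ) : Prop :=
  ∀ x x' g, F (x, g) = F (x', g)

end JetMetric

section LineDeriv

variable {𝕜 E F : Type*} [RCLike 𝕜] [NormedAddCommGroup E] [NormedSpace 𝕜 E]
  [NormedAddCommGroup F] [NormedSpace 𝕜 F] {f : E → F} {y : E}

lemma ContDiffAt.lineDeriv_lineDeriv (hf : ContDiffAt 𝕜 2 f y) (v w : E) :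
    lineDeriv 𝕜 (fun x => lineDeriv 𝕜 f x v) y w = fderiv 𝕜 (fderiv 𝕜 f) y w v := by
  have hev : (fun x => lineDeriv 𝕜 f x v) =ᶠ[nhds y] fun x => fderiv 𝕜 f x v :=
    (hf.eventually (by simp)).mono fun x hx =>
      (hx.differentiableAt (by simp)).lineDeriv_eq_fderiv
  have hd : DifferentiableAt 𝕜 (fderiv 𝕜 f) y :=
    (hf.fderiv_right (m := 1) (by norm_num)).differentiableAt (by simp)
  rw [hev.lineDeriv_eq, (hd.clm_apply (differentiableAt_const v)).lineDeriv_eq_fderiv,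
    fderiv_clm_apply hd (differentiableAt_const v)]
  simp

lemma ContDiffAt.lineDeriv_lineDeriv_comm (hf : ContDiffAt 𝕜 2 f y) (v w : E) :
    lineDeriv 𝕜 (fun x => lineDeriv 𝕜 f x v) y w
      = lineDeriv 𝕜 (fun x => lineDeriv 𝕜 f x w) y v := by
  rw [hf.lineDeriv_lineDeriv, hf.lineDeriv_lineDeriv,
    hf.isSymmSndFDerivAt (by simp [minSmoothness_of_isRCLikeNormedField])]

end LineDeriv

namespace Multiset

variable {α : Type*} [DecidableEq α]

lemma prod_factorial_count_erase {M : Multiset α} {j : α} (hj : j ∈ M) :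
    ∏ s ∈ M.toFinset, (M.count s).factorial
      = M.count j * ∏ s ∈ (M.erase j).toFinset, ((M.erase j).count s).factorial := by
  have hsub : (M.erase j).toFinset ⊆ M.toFinset := fun s hs => by
    simpa using mem_of_mem_erase (mem_toFinset.mp hs)
  rw [Finset.prod_subset hsub (f := fun s => ((M.erase j).count s).factorial) fun s _ hs => by
      rw [count_eq_zero.mpr (by simpa using hs), Nat.factorial_zero],
    ← Finset.mul_prod_erase _ _ (mem_toFinset.mpr hj),
    ← Finset.mul_prod_erase _ _ (mem_toFinset.mpr hj), count_erase_self,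
    ← mul_assoc, Nat.mul_factorial_pred (count_ne_zero.mpr hj)]
  congr 1
  refine Finset.prod_congr rfl fun s hs => ?_
  rw [count_erase_of_ne (Finset.ne_of_mem_erase hs)]

lemma lists_toFinset_eq_biUnion {M : Multiset α} (hM : M ≠ 0) :
    M.lists.toFinset
      = M.toFinset.biUnion fun j => (M.erase j).lists.toFinset.image (List.cons j) := by
  ext l
  simp only [Finset.mem_biUnion, Finset.mem_image, mem_toFinset, mem_lists_iff,
    quot_mk_to_coe]
  constructor
  · rintro rfl
    obtain _ | ⟨a, l'⟩ := l
    · exact absurd rfl hM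
    · exact ⟨a, by simp, l', by simp, rfl⟩
  · rintro ⟨j, hj, l', hl', rfl⟩
    rw [← cons_coe, ← hl', cons_erase hj]

lemma card_lists_toFinset_mul_prod_factorial_count (M : Multiset α) :
    M.lists.toFinset.card * ∏ s ∈ M.toFinset, (M.count s).factorial = (card M).factorial := by
  induction M using strongInductionOn with
  | _ M ih =>
    rcases eq_or_ne M 0 with rfl | hM
    · rw [← coe_nil, lists_coe]
      simp
    have hcard : M.lists.toFinset.card = ∑ j ∈ M.toFinset, (M.erase j).lists.toFinset.card := by
      rw [lists_toFinset_eq_biUnion hM, Finset.card_biUnion]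
      · exact Finset.sum_congr rfl fun j _ => Finset.card_image_of_injective _ List.cons_injective
      · intro j _ j' _ hne
        simp only [Function.onFun, Finset.disjoint_left, Finset.mem_image]
        rintro _ ⟨l, -, rfl⟩ ⟨l', -, h⟩
        exact hne (List.cons_eq_cons.mp h).1.symm
    have hterm : ∀ j ∈ M.toFinset, (M.erase j).lists.toFinset.card *
        ∏ s ∈ M.toFinset, (M.count s).factorial = M.count j * (card M - 1).factorial := by
      intro j hj
      have hjM := mem_toFinset.mp hj
      rw [prod_factorial_count_erase hjM, mul_left_comm, ih _ (erase_lt.mpr hjM),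
        card_erase_of_mem hjM, Nat.pred_eq_sub_one]
    rw [hcard, Finset.sum_mul, Finset.sum_congr rfl hterm, ← Finset.sum_mul,
      toFinset_sum_count_eq, Nat.mul_factorial_pred (card_pos.mpr hM).ne']

variable [Fintype α] {R : Type*} [CommSemiring R]

lemma sum_count_mul_eq_sum_map (M : Multiset α) (f : α → R) :
    ∑ b, (M.count b : R) * f b = (M.map f).sum := by
  rw [Finset.sum_multiset_map_count, Finset.sum_subset (Finset.subset_univ M.toFinset)]
  · simp
  · intro x _ hx
    simp_all

lemma sum_count_mul_four (m₁ m₂ m₃ m₄ : α) (φ : α → Multiset α → R) :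
    ∑ b, (({m₁} + {m₂} + {m₃} + {m₄} : Multiset α).count b : R) *
        φ b ({m₁} + {m₂} + {m₃} + {m₄} - {b})
      = φ m₁ ({m₂} + {m₃} + {m₄}) + φ m₂ ({m₁} + {m₃} + {m₄}) + φ m₃ ({m₁} + {m₂} + {m₄})
        + φ m₄ ({m₁} + {m₂} + {m₃}) := by
  set M : Multiset α := {m₁} + {m₂} + {m₃} + {m₄} with hM
  have hsub : ∀ A x, M = A + {x} → M - {x} = A := fun A x h => h ▸ add_tsub_cancel_right A {x}
  rw [sum_count_mul_eq_sum_map]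
  conv_lhs => enter [1, 2]; rw [hM]
  simp only [map_add, map_singleton, sum_add, sum_singleton]
  rw [hsub ({m₂} + {m₃} + {m₄}) m₁ (by rw [hM]; abel),
    hsub ({m₁} + {m₃} + {m₄}) m₂ (by rw [hM]; abel),
    hsub ({m₁} + {m₂} + {m₄}) m₃ (by rw [hM]; abel), hsub ({m₁} + {m₂} + {m₃}) m₄ rfl]

end Multiset

/-- The pair symmetry of the Riemann tensor, with symmetric instead of antisymmetric pairs. -/
lemma eq_swap_pairs_of_cyclic {ι R : Type*} [Field R] [CharZero R] {X : ι → ι → ι → ι → R}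
    (h₁ : ∀ p q u v, X p q u v = X q p u v) (h₂ : ∀ p q u v, X p q u v = X p q v u)
    (hc : ∀ u m₁ m₂ m₃, X m₂ m₃ u m₁ + X m₁ m₃ u m₂ + X m₁ m₂ u m₃ = 0) (p q u v : ι) :
    X p q u v = X u v p q := by
  linear_combination (hc u v p q - hc p q u v - hc q u v p + hc v p q u
    - (h₁ v q u p).trans (h₂ q v u p) - h₂ v p u q + h₂ q u p v
    + (h₁ u p q v).trans (h₂ p u q v) + h₂ u v q p - h₂ p q v u) / 2

namespace JetMetric

variable {m k : ℕ}

lemma pairWt_comm (p q c d : Fin m) : pairWt q p c d = pairWt p q c d := by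
  unfold pairWt
  rw [add_comm]
  congr 2 <;> exact if_congr and_comm rfl rfl

lemma pairWt_comm_right (p q c d : Fin m) : pairWt p q d c = pairWt p q c d := by
  rw [pairWt, pairWt, add_comm]

lemma sum_sum_pairWt_mul {X : Fin m → Fin m → ℝ} (hX : ∀ a b, X a b = X b a) (p q : Fin m) :
    ∑ a, ∑ b, pairWt p q a b * X a b = X p q := by
  simp only [pairWt, add_div, add_mul, Finset.sum_add_distrib, ite_and, ite_div, ite_mul,
    zero_div, zero_mul, Finset.sum_ite_irrel, Finset.sum_const_zero, Finset.sum_ite_eq,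
    Finset.mem_univ, if_true]
  rw [hX q p]
  ring

lemma idxWt_eq_zero_of_card_ne {I J : MIdx m} (h : Multiset.card I ≠ Multiset.card J) :
    idxWt I J = 0 :=
  if_neg fun hIJ => h (congrArg _ hIJ)

lemma pd_comm_indices (p q : Fin m) (I : MIdx m) (F : Jet m → ℝ) : pd q p I F = pd p q I F := by
  funext z
  simp only [pd, pairWt_comm]

noncomputable def perturb (z : Jet m) (p q : Fin m) (K : MIdx m) (t : ℝ) : Jet m :=
  (z.1, fun c d J => z.2 c d J + t * (pairWt p q c d * idxWt K J))

lemma pd_eq_deriv_perturb (p q : Fin m) (K : MIdx m) (F : Jet m → ℝ) (z : Jet m) :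
    pd p q K F z = deriv (fun t => F (perturb z p q K t)) 0 := rfl

noncomputable def truncDir (k : ℕ) (p q : Fin m) (K : MIdx m) : Trunc m k :=
  (0, fun c d _ l => pairWt p q c d * idxWt K (List.ofFn l))

lemma truncProj_perturb (z : Jet m) (p q : Fin m) (K : MIdx m) (t : ℝ) :
    truncProj m k (perturb z p q K t) = truncProj m k z + t • truncDir k p q K := by
  ext <;> simp [truncProj, perturb, truncDir]

lemma truncDir_eq_zero {p q : Fin m} {K : MIdx m} (hK : k < Multiset.card K) :
    truncDir k p q K = 0 := by
  ext c d j l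
  · rfl
  · have : idxWt K (List.ofFn l) = 0 := idxWt_eq_zero_of_card_ne (by
      simp only [Multiset.coe_card, List.length_ofFn]
      omega)
    simp [truncDir, this]

lemma pd_eq_lineDeriv {F : Jet m → ℝ} {f : Trunc m k → ℝ} (hF : ∀ z, F z = f (truncProj m k z))
    (p q : Fin m) (K : MIdx m) (z : Jet m) :
    pd p q K F z = lineDeriv ℝ f (truncProj m k z) (truncDir k p q K) := by
  simp only [pd_eq_deriv_perturb, lineDeriv, hF, truncProj_perturb]

lemma isOpen_truncDom : IsOpen (truncDom m k) :=
  isOpen_ne_fun (by fun_prop) continuous_const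

lemma truncProj_mem_truncDom {z : Jet m} (hz : z ∈ JetDom m) : truncProj m k z ∈ truncDom m k :=
  hz.2

noncomputable def shortLists (m k : ℕ) : Finset (List (Fin m)) :=
  (List.finite_length_le (Fin m) k).toFinset

lemma mem_shortLists {l : List (Fin m)} : l ∈ shortLists m k ↔ l.length ≤ k := by
  simp [shortLists]

/-- The lists `l` with `l + j = K` are the orderings of `K - j`: there are
`k! / ∏ₛ (K - j)ₛ!` of them, each of weight `∏ₛ Kₛ! / (k + 1)!`. -/
lemma sum_shortLists_idxWt_mul {K : MIdx m} (hK : Multiset.card K = k + 1) (j : Fin m)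
    (φ : MIdx m → ℝ) :
    ∑ l ∈ shortLists m k, idxWt K ((l : MIdx m) + {j}) * φ l
      = (K.count j / (k + 1) : ℝ) * φ (K - {j}) := by
  have hterm : ∀ l ∈ shortLists m k, idxWt K ((l : MIdx m) + {j}) * φ l
      = if (l : MIdx m) + {j} = K then idxWt K K * φ (K - {j}) else 0 := by
    intro l _
    by_cases h : (l : MIdx m) + {j} = K
    · rw [if_pos h, ← h, add_tsub_cancel_right]
    · rw [if_neg h, idxWt, if_neg (Ne.symm h), zero_mul]
  rw [Finset.sum_congr rfl hterm, ← Finset.sum_filter, Finset.sum_const, nsmul_eq_mul]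
  by_cases hj : j ∈ K
  · have hfil : (shortLists m k).filter (fun l : List (Fin m) => (l : MIdx m) + {j} = K)
        = (K.erase j).lists.toFinset := by
      ext l
      rw [Finset.mem_filter, mem_shortLists, Multiset.mem_toFinset, Multiset.mem_lists_iff,
        Multiset.quot_mk_to_coe, ← Multiset.sub_singleton,
        tsub_eq_iff_eq_add_of_le (Multiset.singleton_le.mpr hj), eq_comm (a := K)]
      refine ⟨And.right, fun h => ⟨?_, h⟩⟩
      have := congrArg Multiset.card h
      simp only [Multiset.card_add, Multiset.coe_card, Multiset.card_singleton] at this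
      omega
    have hcount := Multiset.card_lists_toFinset_mul_prod_factorial_count (K.erase j)
    rw [Multiset.card_erase_of_mem hj, hK, Nat.pred_succ] at hcount
    have key : ((K.erase j).lists.toFinset.card : ℝ) *
        ∏ s ∈ K.toFinset, ((K.count s).factorial : ℝ) = K.count j * k.factorial := by
      rw [← hcount]
      exact_mod_cast by rw [Multiset.prod_factorial_count_erase hj]; ring
    rw [hfil, idxWt, if_pos rfl, hK, Nat.factorial_succ]
    push_cast
    field_simp
    linear_combination φ (K - {j}) * key
  · have hfil : (shortLists m k).filter (fun l : List (Fin m) => (l : MIdx m) + {j} = K) = ∅ :=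
      Finset.filter_false_of_mem fun l _ h => hj (h ▸ by simp)
    simp [hfil, Multiset.count_eq_zero.mpr hj]

lemma Dt_zero (i : Fin m) : Dt i (0 : Jet m → ℝ) = 0 := by
  funext z
  simp [Dt, xpd, pd]

lemma DtL_zero (l : List (Fin m)) : DtL l (0 : Jet m → ℝ) = 0 := by
  induction l with
  | nil => rfl
  | cons i l ih => exact (congrArg (Dt i) ih).trans (Dt_zero i)

namespace IsDF

variable {F : Jet m → ℝ}

lemma perturb_eq (hF : IsDF m k F) {K : MIdx m} (hK : k < Multiset.card K) (p q : Fin m)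
    (z : Jet m) (t : ℝ) : F (perturb z p q K t) = F z := by
  obtain ⟨f, -, hf⟩ := hF
  rw [hf, hf, truncProj_perturb, truncDir_eq_zero hK, smul_zero, add_zero]

lemma pd_eq_zero (hF : IsDF m k F) {K : MIdx m} (hK : k < Multiset.card K) (p q : Fin m) :
    pd p q K F = 0 := by
  funext z
  simp [pd_eq_deriv_perturb, hF.perturb_eq hK]

lemma pd_isDF (hF : IsDF m k F) (p q : Fin m) (K : MIdx m) : IsDF m k (pd p q K F) := by
  obtain ⟨f, hf, hFf⟩ := hF
  refine ⟨fun y => lineDeriv ℝ f y (truncDir k p q K), ?_, pd_eq_lineDeriv hFf p q K⟩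
  refine ((hf.fderiv_of_isOpen isOpen_truncDom le_rfl).clm_apply
    (contDiffOn_const (c := truncDir k p q K))).congr fun y hy => ?_
  exact ((hf.contDiffAt (isOpen_truncDom.mem_nhds hy)).differentiableAt
    (by simp)).lineDeriv_eq_fderiv

lemma hasDerivAt_perturb (hF : IsDF m k F) {z : Jet m} (hz : z ∈ JetDom m) (p q : Fin m)
    (K : MIdx m) : HasDerivAt (fun t => F (perturb z p q K t)) (pd p q K F z) 0 := by
  obtain ⟨f, hf, hFf⟩ := hF
  have hd : DifferentiableAt ℝ f (truncProj m k z) :=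
    (hf.contDiffAt (isOpen_truncDom.mem_nhds (truncProj_mem_truncDom hz))).differentiableAt
      (by simp)
  rw [pd_eq_lineDeriv hFf]
  simpa only [HasLineDerivAt, hFf, truncProj_perturb] using hd.lineDifferentiableAt.hasLineDerivAt

lemma pd_pd_comm (hF : IsDF m k F) {z : Jet m} (hz : z ∈ JetDom m) (p q : Fin m) (K : MIdx m)
    (r s : Fin m) (L : MIdx m) : pd r s L (pd p q K F) z = pd p q K (pd r s L F) z := by
  obtain ⟨f, hf, hFf⟩ := hF
  have hf2 : ContDiffAt ℝ 2 f (truncProj m k z) :=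
    (hf.contDiffAt (isOpen_truncDom.mem_nhds (truncProj_mem_truncDom hz))).of_le
      (WithTop.coe_le_coe.mpr le_top)
  rw [pd_eq_lineDeriv (f := fun y => lineDeriv ℝ f y _) (pd_eq_lineDeriv hFf p q K),
    pd_eq_lineDeriv (f := fun y => lineDeriv ℝ f y _) (pd_eq_lineDeriv hFf r s L)]
  exact hf2.lineDeriv_lineDeriv_comm _ _

lemma xpd_perturb (hF : IsDF m k F) {K : MIdx m} (hK : k < Multiset.card K) (i p q : Fin m)
    (z : Jet m) (t : ℝ) : xpd i F (perturb z p q K t) = xpd i F z := by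
  unfold xpd
  congr 1
  funext s
  exact hF.perturb_eq hK p q (Function.update z.1 i (z.1 i + s), z.2) t

lemma Dt_eq_sum (hF : IsDF m k F) (j : Fin m) (z : Jet m) :
    Dt j F z = xpd j F z +
      ∑ l ∈ shortLists m k, ∑ a, ∑ b, z.2 a b ((l : MIdx m) + {j}) * pd a b l F z := by
  rw [Dt, tsum_eq_sum]
  intro l hl
  rw [mem_shortLists, not_le] at hl
  simp [hF.pd_eq_zero (K := l) (by simpa using hl)]

lemma Dt_perturb (hF : IsDF m k F) {K : MIdx m} (hK : Multiset.card K = k + 1) (j p q : Fin m)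
    (z : Jet m) (t : ℝ) : Dt j F (perturb z p q K t)
      = Dt j F z + t * ((K.count j / (k + 1) : ℝ) * pd p q (K - {j}) F z) := by
  have hk : k < Multiset.card K := by omega
  have hterm : ∀ l : List (Fin m), ∑ a, ∑ b, (perturb z p q K t).2 a b ((l : MIdx m) + {j}) *
      pd a b l F (perturb z p q K t) = ∑ a, ∑ b, z.2 a b ((l : MIdx m) + {j}) * pd a b l F z
        + t * (idxWt K ((l : MIdx m) + {j}) * pd p q l F z) := by
    intro l
    rw [← sum_sum_pairWt_mul (X := fun a b => pd a b l F z)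
      (fun a b => congrFun (pd_comm_indices b a _ F) z) p q, Finset.mul_sum,
      Finset.mul_sum, ← Finset.sum_add_distrib]
    refine Finset.sum_congr rfl fun a _ => ?_
    rw [Finset.mul_sum, Finset.mul_sum, ← Finset.sum_add_distrib]
    refine Finset.sum_congr rfl fun b _ => ?_
    rw [(hF.pd_isDF a b l).perturb_eq hk]
    simp only [perturb]
    ring
  rw [hF.Dt_eq_sum, hF.Dt_eq_sum, xpd_perturb hF hk,
    ← sum_shortLists_idxWt_mul hK j (fun L => pd p q L F z), Finset.mul_sum, add_assoc,
    ← Finset.sum_add_distrib]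
  simp only [hterm]

lemma hEL_eq {n : ℕ} (hF : IsDF m (n + 1) F) {I : MIdx m} (hI : Multiset.card I = n)
    (a b : Fin m) (w : Jet m) :
    hEL a b I F w = pd a b I F w - (n + 1) * ∑ j, Dt j (pd a b (I + {j}) F) w := by
  rw [hEL, tsum_eq_sum (s := insert [] (Finset.univ.image fun j => [j]))]
  · rw [Finset.sum_insert (by simp), Finset.sum_image fun _ _ _ _ h => List.singleton_injective h,
      Finset.mul_sum, sub_eq_add_neg, ← Finset.sum_neg_distrib]
    simp [hI, DtL, Nat.choose_succ_self_right, add_mul]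
  · intro J hJ
    have hJ2 : 2 ≤ J.length := by
      obtain _ | ⟨x, _ | ⟨y, r⟩⟩ := J <;> simp_all
    rw [hF.pd_eq_zero (by simp only [Multiset.card_add, Multiset.coe_card]; omega), DtL_zero]
    simp

end IsDF

lemma pd_Helm {n : ℕ} (S : SourceForm m (n + 1)) {I K : MIdx m} (hI : Multiset.card I = n)
    (hK : Multiset.card K = n + 2) (a b c₁ c₂ d₁ d₂ : Fin m) (z : Jet m) :
    pd d₁ d₂ K (Helm S.T a b c₁ c₂ I) z = (-1) ^ n * ((n + 1) / (n + 2)) *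
      ∑ j, K.count j * pd d₁ d₂ (K - {j}) (pd a b (I + {j}) (S.T c₁ c₂)) z := by
  set X := fun j => pd d₁ d₂ (K - {j}) (pd a b (I + {j}) (S.T c₁ c₂)) z
  have hk : n + 1 < Multiset.card K := by omega
  have hsum : ∀ t : ℝ, ∑ j, t * ((K.count j / (n + 1 + 1) : ℝ) * X j)
      = t / (n + 2) * ∑ j, K.count j * X j := fun t => by
    rw [Finset.mul_sum]
    exact Finset.sum_congr rfl fun j _ => by ring
  have hline : ∀ t, Helm S.T a b c₁ c₂ I (perturb z d₁ d₂ K t) = Helm S.T a b c₁ c₂ I z +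
      t * ((-1) ^ n * ((n + 1) / (n + 2)) * ∑ j, K.count j * X j) := by
    intro t
    simp only [Helm, (S.order c₁ c₂).hEL_eq hI, ((S.order a b).pd_isDF c₁ c₂ I).perturb_eq hk,
      ((S.order c₁ c₂).pd_isDF a b I).perturb_eq hk,
      ((S.order c₁ c₂).pd_isDF a b _).Dt_perturb hK, Finset.sum_add_distrib]
    push_cast
    rw [hsum, hI]
    ring
  rw [pd_eq_deriv_perturb, funext hline]
  exact ((hasDerivAt_mul_const _).const_add _).deriv

lemma gMat_perturb {K : MIdx m} (hK : Multiset.card K ≠ 0) (z : Jet m) (p q : Fin m) (t : ℝ) :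
    gMat (perturb z p q K t) = gMat z := by
  ext a b
  simp [gMat, perturb, idxWt_eq_zero_of_card_ne (J := 0) (by simpa using hK)]

lemma perturb_mem_JetDom {z : Jet m} (hz : z ∈ JetDom m) {K : MIdx m}
    (hK : Multiset.card K ≠ 0) (p q : Fin m) (t : ℝ) : perturb z p q K t ∈ JetDom m :=
  ⟨fun c d J => by simp [perturb, hz.1 c d J, pairWt_comm_right],
    by rw [gMat_perturb hK]; exact hz.2⟩

lemma Gamma_perturb {K : MIdx m} (hK : 1 < Multiset.card K) (a b c : Fin m) (z : Jet m)
    (p q : Fin m) (t : ℝ) : Gamma a b c (perturb z p q K t) = Gamma a b c z := by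
  have h1 : ∀ u v w, (perturb z p q K t).2 u v {w} = z.2 u v {w} := fun u v w => by
    simp [perturb, idxWt_eq_zero_of_card_ne (I := K) (J := {w})
      (by rw [Multiset.card_singleton]; omega)]
  simp only [Gamma, ginv, gMat_perturb (by omega : Multiset.card K ≠ 0), h1]

/-- For `|K| = 4` this is `4 Sym_K ∂^{d₁d₂,K∖j} ∂^{ab,pqj} T^{uv}`. -/
noncomputable def symPdPd (T : Fin m → Fin m → Jet m → ℝ) (a b d₁ d₂ : Fin m) (K : MIdx m)
    (z : Jet m) (p q u v : Fin m) : ℝ :=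
  ∑ j, K.count j * pd d₁ d₂ (K - {j}) (pd a b ({p} + {q} + {j}) (T u v)) z

namespace DivFree

section

variable {n : ℕ} {S : SourceForm m (n + 1)}

lemma sum_count_mul_pd (hdiv : DivFree S) {K : MIdx m} (hK : Multiset.card K = n + 2)
    (a p q : Fin m) {z : Jet m} (hz : z ∈ JetDom m) :
    ∑ b, K.count b * pd p q (K - {b}) (S.T a b) z = 0 := by
  have h := hdiv a (perturb z p q K 1) (perturb_mem_JetDom hz (by omega) p q 1)
  simp only [(S.order a _).Dt_perturb hK, Gamma_perturb (by omega : 1 < Multiset.card K),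
    (S.order _ _).perturb_eq (by omega : n + 1 < Multiset.card K), Finset.sum_add_distrib] at h
  have hs : ∑ b, 1 * ((K.count b / (n + 1 + 1) : ℝ) * pd p q (K - {b}) (S.T a b) z)
      = (∑ b, K.count b * pd p q (K - {b}) (S.T a b) z) / (n + 2) := by
    rw [Finset.sum_div]
    exact Finset.sum_congr rfl fun b _ => by ring
  push_cast at h
  rw [hs] at h
  have hzero : (∑ b, K.count b * pd p q (K - {b}) (S.T a b) z) / (n + 2) = 0 := by
    linear_combination h - hdiv a z hz
  exact (div_eq_zero_iff.mp hzero).resolve_right (by positivity)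

lemma sum_count_mul_pd_pd (hdiv : DivFree S) {K : MIdx m} (hK : Multiset.card K = n + 2)
    (a p q r s : Fin m) {L : MIdx m} (hL : Multiset.card L ≠ 0) {z : Jet m}
    (hz : z ∈ JetDom m) : ∑ b, K.count b * pd r s L (pd p q (K - {b}) (S.T a b)) z = 0 := by
  have hD : HasDerivAt (fun t => ∑ b, K.count b * pd p q (K - {b}) (S.T a b) (perturb z r s L t))
      (∑ b, K.count b * pd r s L (pd p q (K - {b}) (S.T a b)) z) 0 :=
    HasDerivAt.fun_sum fun b _ =>
      (((S.order a b).pd_isDF p q _).hasDerivAt_perturb hz r s L).const_mul _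
  have hzero : (fun t => ∑ b, K.count b * pd p q (K - {b}) (S.T a b) (perturb z r s L t))
      = fun _ => 0 :=
    funext fun t => hdiv.sum_count_mul_pd hK a p q (perturb_mem_JetDom hz hL r s t)
  rw [hzero] at hD
  exact hD.unique (hasDerivAt_const 0 0)

end

variable {S : SourceForm m 3}

lemma pd_pd_cyclic (hdiv : DivFree S) (a p q r s m₁ m₂ m₃ m₄ : Fin m) {L : MIdx m}
    (hL : Multiset.card L ≠ 0) {z : Jet m} (hz : z ∈ JetDom m) :
    pd r s L (pd p q ({m₂} + {m₃} + {m₄}) (S.T a m₁)) z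
      + pd r s L (pd p q ({m₁} + {m₃} + {m₄}) (S.T a m₂)) z
      + pd r s L (pd p q ({m₁} + {m₂} + {m₄}) (S.T a m₃)) z
      + pd r s L (pd p q ({m₁} + {m₂} + {m₃}) (S.T a m₄)) z = 0 := by
  rw [← Multiset.sum_count_mul_four m₁ m₂ m₃ m₄ fun b L' => pd r s L (pd p q L' (S.T a b)) z]
  exact hdiv.sum_count_mul_pd_pd (n := 2) (by simp) a p q r s hL hz

lemma symPdPd_cyclic (hdiv : DivFree S) {K : MIdx m} (hK : Multiset.card K = 4)
    (a b d₁ d₂ : Fin m) {z : Jet m} (hz : z ∈ JetDom m) (u m₁ m₂ m₃ : Fin m) :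
    symPdPd S.T a b d₁ d₂ K z m₂ m₃ u m₁ + symPdPd S.T a b d₁ d₂ K z m₁ m₃ u m₂
      + symPdPd S.T a b d₁ d₂ K z m₁ m₂ u m₃ = 0 := by
  have hL : ∀ j, Multiset.card (K - {j}) ≠ 0 := fun j => by
    rw [Multiset.sub_singleton, Multiset.card_erase_eq_ite]
    split_ifs <;> simp [hK]
  have hswap : ∑ j, K.count j * pd d₁ d₂ (K - {j}) (pd a b ({m₁} + {m₂} + {m₃}) (S.T u j)) z
      = 0 := by
    rw [← hdiv.sum_count_mul_pd_pd (n := 2) hK u d₁ d₂ a b (L := {m₁} + {m₂} + {m₃}) (by simp) hz]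
    exact Finset.sum_congr rfl fun j _ => by rw [(S.order u j).pd_pd_comm hz]
  simp only [symPdPd, ← Finset.sum_add_distrib]
  calc _ = ∑ j, -(K.count j * pd d₁ d₂ (K - {j}) (pd a b ({m₁} + {m₂} + {m₃}) (S.T u j)) z) :=
        Finset.sum_congr rfl fun j _ => by
          linear_combination (K.count j : ℝ) * hdiv.pd_pd_cyclic u a b d₁ d₂ m₁ m₂ m₃ j (hL j) hz
    _ = 0 := by rw [Finset.sum_neg_distrib, hswap, neg_zero]

lemma symPdPd_swap (hdiv : DivFree S) {K : MIdx m} (hK : Multiset.card K = 4)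
    (a b d₁ d₂ : Fin m) {z : Jet m} (hz : z ∈ JetDom m) (p q u v : Fin m) :
    symPdPd S.T a b d₁ d₂ K z p q u v = symPdPd S.T a b d₁ d₂ K z u v p q :=
  eq_swap_pairs_of_cyclic (fun p q u v => by simp only [symPdPd, add_comm ({p} : MIdx m)])
    (fun p q u v => by simp only [symPdPd, S.symm u v]) (hdiv.symPdPd_cyclic hK a b d₁ d₂ hz)
    p q u v

end DivFree

/-- Since `∂^{d₁d₂,J}` is symmetric in `J`, the symmetrization over `(j₁,j₂,j₃,j₄)` reduces to
the displayed four-term average. -/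
theorem stmt17 {m : ℕ} (S : SourceForm m 3) (hdiv : DivFree S) :
    ∀ a b c₁ c₂ d₁ d₂ i₁ i₂ j₁ j₂ j₃ j₄ : Fin m, ∀ z ∈ JetDom m,
      pd d₁ d₂ ({j₁} + {j₂} + {j₃} + {j₄}) (Helm S.T a b c₁ c₂ ({i₁} + {i₂})) z
      = 3 * ((pd d₁ d₂ ({j₂} + {j₃} + {j₄}) (pd a b ({c₁} + {c₂} + {j₁}) (S.T i₁ i₂)) z
          + pd d₁ d₂ ({j₁} + {j₃} + {j₄}) (pd a b ({c₁} + {c₂} + {j₂}) (S.T i₁ i₂)) z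
          + pd d₁ d₂ ({j₁} + {j₂} + {j₄}) (pd a b ({c₁} + {c₂} + {j₃}) (S.T i₁ i₂)) z
          + pd d₁ d₂ ({j₁} + {j₂} + {j₃}) (pd a b ({c₁} + {c₂} + {j₄}) (S.T i₁ i₂)) z) / 4) := by
  intro a b c₁ c₂ d₁ d₂ i₁ i₂ j₁ j₂ j₃ j₄ z hz
  have hK : Multiset.card ({j₁} + {j₂} + {j₃} + {j₄} : MIdx m) = 4 := by simp
  rw [pd_Helm (n := 2) S (by simp) hK]
  change (-1) ^ 2 * ((2 + 1) / (2 + 2)) * symPdPd S.T a b d₁ d₂ _ z i₁ i₂ c₁ c₂ = _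
  rw [hdiv.symPdPd_swap hK a b d₁ d₂ hz, symPdPd, Multiset.sum_count_mul_four j₁ j₂ j₃ j₄
    fun j L => pd d₁ d₂ L (pd a b ({c₁} + {c₂} + {j}) (S.T i₁ i₂)) z]
  ring

end JetMetric
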